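/- arXiv:2508.21106 — 3 statements merged into one kernel-verified Lean document; each statement's English description precedes it below -/
import Mathlib

section
/- Let G be an n×n real positive definite matrix with positive definite square root G^{1/2}, let g ∈ ℝ^n, set ĝ = (G^{1/2})^{-1} g and α = α(ĝ). Then G + ggᵀ = G^{1/2} (I + α ĝĝᵀ)(I + α ĝĝᵀ) G^{1/2}. -/
open Matrix Finset

/-- The Euclidean norm of a vector in ℝ^n. -/
noncomputable def euclNorm {n : ℕ} (v : Fin n → ℝ) : ℝ :=
  Real.sqrt (∑ i, v i ^ 2)

/-- `α(v) = (√(1 + ‖v‖²) − 1)/‖v‖²` (equal to `0` when `v = 0`). -/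
noncomputable def alphaF {n : ℕ} (v : Fin n → ℝ) : ℝ :=
  (Real.sqrt (1 + euclNorm v ^ 2) - 1) / euclNorm v ^ 2

/-- The rank-one outer product `u wᵀ`. -/
def outer {n : ℕ} (u w : Fin n → ℝ) : Matrix (Fin n) (Fin n) ℝ :=
  Matrix.of fun i j => u i * w j

lemma outer_mul_outer {n : ℕ} (u v w z : Fin n → ℝ) :
    outer u v * outer w z = (∑ i, v i * w i) • outer u z := by
  ext i j
  simp [outer, Matrix.mul_apply, Finset.mul_sum, Finset.sum_mul]
  exact Finset.sum_congr rfl fun k _ => by ring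

lemma mul_outer' {n : ℕ} (A : Matrix (Fin n) (Fin n) ℝ) (u v : Fin n → ℝ) :
    A * outer u v = outer (A.mulVec u) v := by
  ext i j
  simp [outer, Matrix.mul_apply, Matrix.mulVec, dotProduct, Finset.sum_mul]
  apply Finset.sum_congr rfl
  intro k _
  ring

lemma outer_mul' {n : ℕ} (A : Matrix (Fin n) (Fin n) ℝ) (u v : Fin n → ℝ) :
    outer u v * A = outer u (Aᵀ.mulVec v) := by
  ext i j
  simp [outer, Matrix.mul_apply, Matrix.mulVec, dotProduct, Finset.mul_sum]
  apply Finset.sum_congr rfl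
  intro k _
  ring

/-- if `G` is positive definite with positive definite square root `S = G^{1/2}`,
`ĝ = S⁻¹ g` and `α = α(ĝ)`, then `G + ggᵀ = S (I + α ĝĝᵀ)(I + α ĝĝᵀ) S`. -/
theorem rank_one_update_factorization {n : ℕ} (G S : Matrix (Fin n) (Fin n) ℝ)
    (hG : G.PosDef) (hS : S.PosDef) (hSS : S * S = G) (g : Fin n → ℝ) :
    G + outer g g =
      S * (((1 : Matrix (Fin n) (Fin n) ℝ) + alphaF (S⁻¹.mulVec g) • outer (S⁻¹.mulVec g) (S⁻¹.mulVec g)) *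
        ((1 : Matrix (Fin n) (Fin n) ℝ) + alphaF (S⁻¹.mulVec g) • outer (S⁻¹.mulVec g) (S⁻¹.mulVec g))) * S := by
  set v : Fin n → ℝ := S⁻¹.mulVec g with hv
  set α : ℝ := alphaF v with hα
  set P : Matrix (Fin n) (Fin n) ℝ := outer v v with hP
  set t : ℝ := ∑ i, v i ^ 2 with ht
  have ht0 : 0 ≤ t := Finset.sum_nonneg fun i _ => sq_nonneg _
  have hdet : IsUnit S.det := isUnit_iff_ne_zero.mpr hS.det_pos.ne'
  have hSinv : S * S⁻¹ = 1 := Matrix.mul_nonsing_inv S hdet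
  have hsym : Sᵀ = S := by
    have := hS.1
    rwa [Matrix.IsHermitian, Matrix.conjTranspose_eq_transpose_of_trivial] at this
  have hg : S.mulVec v = g := by
    rw [hv, Matrix.mulVec_mulVec, hSinv, Matrix.one_mulVec]
  have hnorm : euclNorm v ^ 2 = t := Real.sq_sqrt ht0
  have hPP : P * P = t • P := by
    rw [hP, outer_mul_outer]
    congr 1
    exact Finset.sum_congr rfl fun i _ => (sq (v i)).symm ▸ by ring
  have hSPS : S * P * S = outer g g := by
    rw [hP, mul_outer', hg, outer_mul', hsym, hg]
  have key : (1 + α • P) * (1 + α • P) = 1 + (2 * α + α ^ 2 * t) • P := by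
    have hPP' : α • P * (α • P) = (α ^ 2 * t) • P := by
      rw [Matrix.smul_mul, Matrix.mul_smul, hPP, smul_smul, smul_smul]
      congr 1
      ring
    rw [mul_add, add_mul, add_mul, hPP']
    simp only [one_mul, mul_one]
    rw [show (2 * α + α ^ 2 * t) • P = α • P + α • P + (α ^ 2 * t) • P by
        rw [add_smul, two_mul, add_smul]]
    abel
  rcases eq_or_lt_of_le ht0 with h0 | hpos
  · have hv0 : v = 0 := by
      funext i
      have := (Finset.sum_eq_zero_iff_of_nonneg (fun i _ => sq_nonneg (v i))).mp h0.symm i (by simp)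
      exact pow_eq_zero_iff (by norm_num) |>.mp this
    have hP0 : P = 0 := by ext i j; simp [hP, outer, hv0]
    have hg0 : g = 0 := by rw [← hg, hv0, Matrix.mulVec_zero]
    have hzero : outer (0 : Fin n → ℝ) 0 = 0 := by ext i j; simp [outer]
    rw [hg0, hP0, hzero]
    simp [← hSS]
  · have hcoef : 2 * α + α ^ 2 * t = 1 := by
      have hs : Real.sqrt (1 + t) ^ 2 = 1 + t :=
        Real.sq_sqrt (by linarith)
      rw [hα, alphaF, hnorm]
      field_simp
      nlinarith [hs]
    rw [key, hcoef, one_smul, mul_add, mul_one, add_mul, hSS, hSPS]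
end

section
/- (Theorem 1, one-step form.) Let L be an invertible n×n real matrix, g ∈ ℝ^n, ḡ = L^{-1} g, α = α(ḡ), and L' = L(I + α ḡḡᵀ). Then (L')^{-1} g = (1 + ‖L^{-1} g‖²)^{-1/2} · L^{-1} g. -/
/-! The vector `ḡ = L⁻¹ g` is an eigenvector of the rank-one update `I + α ḡḡᵀ`, with eigenvalue
`1 + α ‖ḡ‖²`, and `α` is chosen precisely so that this equals `√(1 + ‖ḡ‖²)`. Hence
`(L')⁻¹ g = (I + α ḡḡᵀ)⁻¹ ḡ = ḡ / √(1 + ‖ḡ‖²)`; invertibility of the update comes from the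
matrix determinant lemma `det (I + u wᵀ) = 1 + wᵀu`. -/

open Matrix Finset

namespace Matrix

variable {m K : Type*} [Fintype m] [DecidableEq m] [Field K]

theorem det_one_add_vecMulVec (u w : m → K) : (1 + vecMulVec u w).det = 1 + w ⬝ᵥ u := by
  rw [vecMulVec_eq Unit, det_one_add_replicateCol_mul_replicateRow]

theorem one_add_vecMulVec_mulVec (u w : m → K) :
    (1 + vecMulVec u w) *ᵥ u = (1 + w ⬝ᵥ u) • u := by
  rw [add_mulVec, one_mulVec, vecMulVec_mulVec, op_smul_eq_smul, add_smul, one_smul]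

/-- Junk values make this hold unconditionally: if `1 + w ⬝ᵥ u = 0` both sides vanish. -/
theorem inv_one_add_vecMulVec_mulVec (u w : m → K) :
    (1 + vecMulVec u w)⁻¹ *ᵥ u = (1 + w ⬝ᵥ u)⁻¹ • u := by
  rcases eq_or_ne (1 + w ⬝ᵥ u) 0 with h | h
  · rw [h, nonsing_inv_apply_not_isUnit _ (by simp [det_one_add_vecMulVec, h])]
    simp
  · have hdet : IsUnit (1 + vecMulVec u w).det := by
      rw [det_one_add_vecMulVec]; exact h.isUnit
    calc (1 + vecMulVec u w)⁻¹ *ᵥ u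
        = (1 + w ⬝ᵥ u)⁻¹ • ((1 + vecMulVec u w)⁻¹ *ᵥ ((1 + vecMulVec u w) *ᵥ u)) := by
          rw [one_add_vecMulVec_mulVec, mulVec_smul, smul_smul, inv_mul_cancel₀ h, one_smul]
      _ = (1 + w ⬝ᵥ u)⁻¹ • u := by rw [mulVec_mulVec, nonsing_inv_mul _ hdet, one_mulVec]

end Matrix

theorem euclNorm_sq {n : ℕ} (v : Fin n → ℝ) : euclNorm v ^ 2 = v ⬝ᵥ v := by
  rw [euclNorm, Real.sq_sqrt (by positivity), dotProduct]
  simp only [sq]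

theorem one_add_alphaF_mul_euclNorm_sq {n : ℕ} (v : Fin n → ℝ) :
    1 + alphaF v * euclNorm v ^ 2 = Real.sqrt (1 + euclNorm v ^ 2) := by
  rcases eq_or_ne (euclNorm v ^ 2) 0 with h | h
  · simp [h]
  · rw [alphaF, div_mul_cancel₀ _ h, add_sub_cancel]

theorem outer_eq_vecMulVec {n : ℕ} (u w : Fin n → ℝ) : outer u w = vecMulVec u w := rfl

theorem preconditioned_gradient_one_step_general {n : ℕ} (L : Matrix (Fin n) (Fin n) ℝ)
    (g : Fin n → ℝ) :
    (L * ((1 : Matrix (Fin n) (Fin n) ℝ) +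
        alphaF (L⁻¹.mulVec g) • outer (L⁻¹.mulVec g) (L⁻¹.mulVec g)))⁻¹.mulVec g
      = (Real.sqrt (1 + euclNorm (L⁻¹.mulVec g) ^ 2))⁻¹ • L⁻¹.mulVec g := by
  rw [Matrix.mul_inv_rev, ← mulVec_mulVec]
  set v := L⁻¹ *ᵥ g
  rw [outer_eq_vecMulVec, ← vecMulVec_smul, inv_one_add_vecMulVec_mulVec, smul_dotProduct,
    smul_eq_mul, ← euclNorm_sq, one_add_alphaF_mul_euclNorm_sq]

/-- Theorem 1, one-step form: with `ḡ = L⁻¹ g`, `α = α(ḡ)` and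
`L' = L(I + α ḡḡᵀ)`, one has `(L')⁻¹ g = (1 + ‖L⁻¹ g‖²)^{-1/2} · L⁻¹ g`. -/
theorem preconditioned_gradient_one_step {n : ℕ} (L : Matrix (Fin n) (Fin n) ℝ)
    (hL : IsUnit L.det) (g : Fin n → ℝ) :
    (L * ((1 : Matrix (Fin n) (Fin n) ℝ) +
        alphaF (L⁻¹.mulVec g) • outer (L⁻¹.mulVec g) (L⁻¹.mulVec g)))⁻¹.mulVec g
      = (Real.sqrt (1 + euclNorm (L⁻¹.mulVec g) ^ 2))⁻¹ • L⁻¹.mulVec g :=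
  preconditioned_gradient_one_step_general L g
end

section
/- (Inductive step of Lemma 1.) Let p₁, …, p_k and q₁, …, q_k be vectors in ℝ^n, let v ∈ ℝ^n and β ∈ ℝ. Define p_{k+1} = β v and q_{k+1} = (I − Σ_{i=1}^{k} q_i p_iᵀ) v. Then (I − β vvᵀ)(I − Σ_{i=1}^{k} p_i q_iᵀ) = I − Σ_{i=1}^{k+1} p_i q_iᵀ. -/
open Matrix Finset

/-- inductive step of Lemma 1: given `p₁,…,p_k`, `q₁,…,q_k`, `v`, `β`,
with `p_{k+1} = β v` and `q_{k+1} = (I − ∑ q_i p_iᵀ) v`, one has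
`(I − β vvᵀ)(I − ∑_{i=1}^{k} p_i q_iᵀ) = I − ∑_{i=1}^{k+1} p_i q_iᵀ`. -/
theorem lemma1_inductive_step {n k : ℕ} (p q : Fin k → Fin n → ℝ)
    (v : Fin n → ℝ) (β : ℝ) :
    ((1 : Matrix (Fin n) (Fin n) ℝ) - β • outer v v) *
      ((1 : Matrix (Fin n) (Fin n) ℝ) - ∑ i, outer (p i) (q i))
    = (1 : Matrix (Fin n) (Fin n) ℝ) -
        (∑ i, outer (p i) (q i) +
          outer (β • v)
            (((1 : Matrix (Fin n) (Fin n) ℝ) - ∑ i, outer (q i) (p i)).mulVec v)) := by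
  ext i j
  simp only [Matrix.sub_apply, Matrix.add_apply, Matrix.mul_apply, Matrix.one_apply,
    Matrix.sum_apply, Matrix.smul_apply, outer, Matrix.of_apply, Matrix.mulVec,
    dotProduct, Pi.smul_apply, smul_eq_mul, Finset.sum_sub_distrib,
    Finset.mul_sum, Finset.sum_mul, sub_mul, mul_sub, ite_mul, mul_ite, mul_zero,
    zero_mul, mul_one, one_mul, Finset.sum_ite_eq, Finset.sum_ite_eq',
    Finset.mem_univ, if_true]
  rw [Finset.sum_comm]
  ring_nf
  simp only [Finset.sum_ite_eq, Finset.mem_univ, if_true]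
  congr 1
  exact Finset.sum_congr rfl fun x _ => Finset.sum_congr rfl fun y _ => by ring
end
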